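/- (Square-summability of steps, proved in Lemma 2.1(iii)) The series Σ_{k=0}^∞ ‖x^k − x^{k−1}‖₂² converges; more precisely, for every t ≥ 0, (β/2)(1 − ᾱ²) Σ_{k=0}^t ‖x^k − x^{k−1}‖₂² ≤ F(x⁰, ε⁰) − inf{F(x,0) : F(x,0) ≤ F(x⁰, ε⁰)}. -/

import Mathlib

/-!
The minimized model majorizes `F` up to the proximal term: `f` is sandwiched between its
linearization at `yᵏ` (convexity) and that linearization plus `(L_f/2)‖x − yᵏ‖²` (descent lemma),
and `t ↦ t^p` lies below its tangent at `|xᵢᵏ| + εᵢᵏ`, whose slope is the weight `wᵢᵏ`; shrinking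
`ε` only lowers `F`. The model is `β`-strongly convex with minimizer `xᵏ⁺¹`, so comparing it at
`xᵏ` yields the decrease
`ψ(xᵏ⁺¹, xᵏ, εᵏ⁺¹) + (β/2)(1 − ᾱ²)‖xᵏ − xᵏ⁻¹‖² ≤ ψ(xᵏ, xᵏ⁻¹, εᵏ)`, where the extrapolation enters
through `‖xᵏ − yᵏ‖ = αᵏ‖xᵏ − xᵏ⁻¹‖`. Telescoping keeps every iterate in the bounded, closed level
set, on which the continuous `F(·, 0)` is bounded below; this bounds the partial sums.
-/

open Filter
open scoped BigOperators InnerProductSpace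

noncomputable section

/-- Real n-dimensional Euclidean space. -/
abbrev Vec (n : ℕ) := EuclideanSpace ℝ (Fin n)

/-- The smoothed objective `F(x, ε) = f(x) + λ ∑ᵢ (|xᵢ| + εᵢ)^p`. -/
def Fobj (n : ℕ) (p lam : ℝ) (f : Vec n → ℝ) (z : Vec n) (ε : Fin n → ℝ) : ℝ :=
  f z + lam * ∑ i, (|z i| + ε i) ^ p

/-- The merit function `ψ(x, y, ε) = F(x, ε) + (β/2)‖x − y‖²`. -/
def psiObj (n : ℕ) (p lam β : ℝ) (f : Vec n → ℝ) (z y : Vec n) (ε : Fin n → ℝ) : ℝ :=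
  Fobj n p lam f z ε + β / 2 * ‖z - y‖ ^ 2

/-- The weighted-ℓ₁ subproblem objective at iteration `k`:
`⟨∇f(yₖ), z⟩ + (β/2)‖z − yₖ‖² + λ ∑ᵢ wᵢᵏ |zᵢ|` with `wᵢᵏ = p(|xᵢᵏ| + εᵢᵏ)^{p−1}`. -/
def subObj (n : ℕ) (p lam β : ℝ) (f : Vec n → ℝ) (xk yk : Vec n) (εk : Fin n → ℝ)
    (z : Vec n) : ℝ :=
  ⟪gradient f yk, z⟫_ℝ + β / 2 * ‖z - yk‖ ^ 2
    + lam * ∑ i, (p * (|xk i| + εk i) ^ (p - 1)) * |z i|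

/-- All the hypotheses of the EIRL1 algorithm (Algorithm 1) together with
Assumption 2.1.  The convention `x⁻¹ = x⁰` is encoded through truncated
subtraction on ℕ (`x (k-1) = x 0` for `k = 0`). -/
structure EIRL1 (n : ℕ) (p lam β Lf μ αbar : ℝ) (f : Vec n → ℝ)
    (x y : ℕ → Vec n) (ε : ℕ → Fin n → ℝ) (α : ℕ → ℝ) : Prop where
  hn : 1 ≤ n
  hp0 : 0 < p
  hp1 : p < 1
  hlam : 0 < lam
  hμ0 : 0 < μ
  hμ1 : μ < 1
  hLf : 0 ≤ Lf
  hβ : Lf < β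
  hconv : ConvexOn ℝ Set.univ f
  hdiff : ContDiff ℝ 1 f
  hlip : ∀ a b, ‖gradient f a - gradient f b‖ ≤ Lf * ‖a - b‖
  hαbar0 : 0 ≤ αbar
  hαbar1 : αbar < 1
  hα0 : ∀ k, 0 ≤ α k
  hα1 : ∀ k, α k ≤ αbar
  hε0 : ∀ i, 0 < ε 0 i
  hεpos : ∀ k i, 0 < ε (k + 1) i
  hεdec : ∀ k i, ε (k + 1) i ≤ μ * ε k i
  hy : ∀ k, y k = x k + α k • (x k - x (k - 1))
  hmin : ∀ k z, z ≠ x (k + 1) →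
    subObj n p lam β f (x k) (y k) (ε k) (x (k + 1)) < subObj n p lam β f (x k) (y k) (ε k) z
  hlevel : Bornology.IsBounded {z : Vec n | Fobj n p lam f z 0 ≤ Fobj n p lam f (x 0) (ε 0)}

open Topology

section Smooth

variable {E : Type*} [NormedAddCommGroup E] [InnerProductSpace ℝ E] [CompleteSpace E]
  {f : E → ℝ}

theorem hasDerivAt_comp_add_smul (hf : Differentiable ℝ f) (a v : E) (t : ℝ) :
    HasDerivAt (fun s : ℝ => f (a + s • v)) ⟪gradient f (a + t • v), v⟫_ℝ t := by
  have hline : HasDerivAt (fun s : ℝ => a + s • v) v t := by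
    simpa using ((hasDerivAt_id t).smul_const v).const_add a
  exact (hasGradientAt_iff_hasFDerivAt.1 (hf _).hasGradientAt).comp_hasDerivAt t hline

theorem ConvexOn.add_inner_gradient_le (hconv : ConvexOn ℝ Set.univ f)
    (hf : Differentiable ℝ f) (a b : E) : f a + ⟪gradient f a, b - a⟫_ℝ ≤ f b := by
  have hline : ConvexOn ℝ Set.univ (fun s : ℝ => f (a + s • (b - a))) := by
    simpa [Function.comp_def, AffineMap.lineMap_apply_module', add_comm] using
      hconv.comp_affineMap (AffineMap.lineMap a b)
  have hslope := hline.le_slope_of_hasDerivAt (Set.mem_univ 0) (Set.mem_univ 1) one_pos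
    (by simpa only [zero_smul, add_zero] using hasDerivAt_comp_add_smul hf a (b - a) 0)
  simp only [slope_def_field, one_smul, zero_smul, add_zero, add_sub_cancel, sub_zero,
    div_one] at hslope
  linarith

theorem le_add_inner_gradient_add_sq_of_lipschitz {L : ℝ} (hf : Differentiable ℝ f)
    (hlip : ∀ a b, ‖gradient f a - gradient f b‖ ≤ L * ‖a - b‖) (a b : E) :
    f b ≤ f a + ⟪gradient f a, b - a⟫_ℝ + L / 2 * ‖b - a‖ ^ 2 := by
  set v := b - a
  set h : ℝ → ℝ := fun t => f (a + t • v) - t * ⟪gradient f a, v⟫_ℝ - L / 2 * t ^ 2 * ‖v‖ ^ 2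
  have hderiv : ∀ t, HasDerivAt h
      (⟪gradient f (a + t • v), v⟫_ℝ - ⟪gradient f a, v⟫_ℝ - L * t * ‖v‖ ^ 2) t := by
    intro t
    exact (((hasDerivAt_comp_add_smul hf a v t).sub
      ((hasDerivAt_id' t).mul_const ⟪gradient f a, v⟫_ℝ)).sub
      (((hasDerivAt_pow 2 t).const_mul (L / 2)).mul_const (‖v‖ ^ 2))).congr_deriv (by ring)
  have hanti : AntitoneOn h (Set.Ici 0) := by
    refine antitoneOn_of_hasDerivWithinAt_nonpos (convex_Ici 0)
      (fun t _ => (hderiv t).continuousAt.continuousWithinAt)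
      (fun t _ => (hderiv t).hasDerivWithinAt) fun t ht => ?_
    rw [interior_Ici, Set.mem_Ioi] at ht
    have hgrad : ⟪gradient f (a + t • v) - gradient f a, v⟫_ℝ ≤ L * t * ‖v‖ ^ 2 :=
      calc ⟪gradient f (a + t • v) - gradient f a, v⟫_ℝ
          ≤ ‖gradient f (a + t • v) - gradient f a‖ * ‖v‖ := real_inner_le_norm _ _
        _ ≤ L * ‖t • v‖ * ‖v‖ := by
          gcongr
          simpa using hlip (a + t • v) a
        _ = L * t * ‖v‖ ^ 2 := by rw [norm_smul, Real.norm_of_nonneg ht.le]; ring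
    rw [inner_sub_left] at hgrad
    linarith
  have h01 := hanti Set.self_mem_Ici (Set.mem_Ici.2 zero_le_one) zero_le_one
  simp only [h, v, one_smul, add_sub_cancel, zero_smul, add_zero, one_pow, one_mul, zero_mul,
    sub_zero, ne_eq, OfNat.ofNat_ne_zero, not_false_eq_true, zero_pow, mul_zero] at h01
  linarith

end Smooth

section StrongConvexity

variable {E : Type*} [NormedAddCommGroup E] [InnerProductSpace ℝ E]

theorem ConvexOn.strongConvexOn_add_sq_norm_sub {h : E → ℝ} (hh : ConvexOn ℝ Set.univ h)
    (m : ℝ) (y : E) : StrongConvexOn Set.univ m (fun z => h z + m / 2 * ‖z - y‖ ^ 2) := by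
  rw [strongConvexOn_iff_convex]
  have hlin : ConvexOn ℝ Set.univ (fun z => -m * ⟪y, z⟫_ℝ) :=
    ((-m) • innerₛₗ ℝ y).convexOn convex_univ
  have hsplit : (fun z => h z + m / 2 * ‖z - y‖ ^ 2 - m / 2 * ‖z‖ ^ 2)
      = fun z => h z + -m * ⟪y, z⟫_ℝ + m / 2 * ‖y‖ ^ 2 := by
    ext z
    rw [norm_sub_sq_real, real_inner_comm]
    ring
  rw [hsplit]
  exact (hh.add hlin).add_const _

theorem StrongConvexOn.add_sq_norm_sub_le_of_isMinOn {g : E → ℝ} {m : ℝ} {x : E}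
    (hg : StrongConvexOn Set.univ m g) (hx : IsMinOn g Set.univ x) (z : E) :
    g x + m / 2 * ‖z - x‖ ^ 2 ≤ g z := by
  have hchord : ∀ t ∈ Set.Ioo (0 : ℝ) 1, g x + (1 - t) * (m / 2 * ‖z - x‖ ^ 2) ≤ g z := by
    rintro t ⟨ht0, ht1⟩
    have hconv := hg.2 (Set.mem_univ x) (Set.mem_univ z) (sub_nonneg.2 ht1.le) ht0.le
      (sub_add_cancel 1 t)
    have hmin : g x ≤ g ((1 - t) • x + t • z) := hx (Set.mem_univ _)
    rw [norm_sub_rev] at hconv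
    simp only [smul_eq_mul] at hconv
    have : t * (g x + (1 - t) * (m / 2 * ‖z - x‖ ^ 2)) ≤ t * g z := by nlinarith
    exact le_of_mul_le_mul_left this ht0
  have hlim : Tendsto (fun t : ℝ => g x + (1 - t) * (m / 2 * ‖z - x‖ ^ 2)) (𝓝[>] 0)
      (𝓝 (g x + (1 - 0) * (m / 2 * ‖z - x‖ ^ 2))) :=
    ((continuous_const.add ((continuous_const.sub continuous_id).mul continuous_const)).tendsto
      0).mono_left nhdsWithin_le_nhds
  simpa using le_of_tendsto hlim (eventually_of_mem (Ioo_mem_nhdsGT one_pos) hchord)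

end StrongConvexity

theorem convexOn_sum_mul_abs {ι : Type*} [Fintype ι] {w : ι → ℝ} (hw : ∀ i, 0 ≤ w i) :
    ConvexOn ℝ Set.univ (fun z : EuclideanSpace ℝ ι => ∑ i, w i * |z i|) := by
  have hterm : ∀ i, ConvexOn ℝ Set.univ (fun z : EuclideanSpace ℝ ι => w i * |z i|) := fun i =>
    by simpa [Function.comp_def] using
      (convexOn_univ_norm.comp_linearMap (EuclideanSpace.proj (𝕜 := ℝ) i).toLinearMap).smul (hw i)
  simpa [Finset.sum_fn] using
    Finset.sum_induction (fun i (z : EuclideanSpace ℝ ι) => w i * |z i|) (ConvexOn ℝ Set.univ) (fun _ _ => ConvexOn.add)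
      (convexOn_const 0 convex_univ) fun i _ => hterm i

theorem Real.rpow_le_rpow_add_mul_sub {p r s : ℝ} (hp0 : 0 ≤ p) (hp1 : p ≤ 1) (hr : 0 < r)
    (hs : 0 ≤ s) : s ^ p ≤ r ^ p + p * r ^ (p - 1) * (s - r) := by
  have hbern : (s / r) ^ p ≤ 1 + p * (s / r - 1) := by
    simpa using rpow_one_add_le_one_add_mul_self
      (by linarith [div_nonneg hs hr.le] : -1 ≤ s / r - 1) hp0 hp1
  calc s ^ p = r ^ p * (s / r) ^ p := by
        rw [← Real.mul_rpow hr.le (div_nonneg hs hr.le), mul_div_cancel₀ _ hr.ne']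
    _ ≤ r ^ p * (1 + p * (s / r - 1)) := by gcongr
    _ = r ^ p + p * r ^ (p - 1) * (s - r) := by
        rw [Real.rpow_sub_one hr.ne']
        field_simp

theorem rpow_abs_add_le_of_le {p a a' e e' : ℝ} (hp0 : 0 ≤ p) (hp1 : p ≤ 1) (he : 0 < e)
    (he' : 0 ≤ e') (hle : e' ≤ e) :
    (|a'| + e') ^ p ≤ (|a| + e) ^ p + p * (|a| + e) ^ (p - 1) * (|a'| - |a|) := by
  have hr : 0 < |a| + e := by positivity
  calc (|a'| + e') ^ p ≤ (|a'| + e) ^ p := by gcongr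
    _ ≤ (|a| + e) ^ p + p * (|a| + e) ^ (p - 1) * ((|a'| + e) - (|a| + e)) :=
        Real.rpow_le_rpow_add_mul_sub hp0 hp1 hr (by positivity)
    _ = (|a| + e) ^ p + p * (|a| + e) ^ (p - 1) * (|a'| - |a|) := by ring

section Objective

variable {n : ℕ} {p lam β : ℝ} {f : Vec n → ℝ}

theorem Fobj_zero_le (hp : 0 ≤ p) (hlam : 0 ≤ lam) (z : Vec n) {ε : Fin n → ℝ}
    (hε : ∀ i, 0 ≤ ε i) : Fobj n p lam f z 0 ≤ Fobj n p lam f z ε := by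
  unfold Fobj
  gcongr with i
  · simp
  · simpa using hε i

theorem Fobj_le_psiObj (hβ : 0 ≤ β) (z y : Vec n) (ε : Fin n → ℝ) :
    Fobj n p lam f z ε ≤ psiObj n p lam β f z y ε :=
  le_add_of_nonneg_right (by positivity)

theorem continuous_Fobj (hf : Continuous f) (hp : 0 ≤ p) (ε : Fin n → ℝ) :
    Continuous (fun z => Fobj n p lam f z ε) := by
  unfold Fobj
  fun_prop (disch := exact fun _ => Or.inr hp)

theorem subObj_strongConvexOn {xk yk : Vec n} {εk : Fin n → ℝ} (hlam : 0 ≤ lam)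
    (hw : ∀ i, 0 ≤ p * (|xk i| + εk i) ^ (p - 1)) :
    StrongConvexOn Set.univ β (subObj n p lam β f xk yk εk) := by
  have hconv : ConvexOn ℝ Set.univ (fun z : Vec n => ⟪gradient f yk, z⟫_ℝ
      + lam * ∑ i, p * (|xk i| + εk i) ^ (p - 1) * |z i|) :=
    ((innerₛₗ ℝ (gradient f yk)).convexOn convex_univ).add
      ((convexOn_sum_mul_abs hw).smul hlam)
  have hsplit : subObj n p lam β f xk yk εk = fun z => ⟪gradient f yk, z⟫_ℝ
      + lam * ∑ i, p * (|xk i| + εk i) ^ (p - 1) * |z i| + β / 2 * ‖z - yk‖ ^ 2 := by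
    ext z
    simp only [subObj]
    ring
  rw [hsplit]
  exact hconv.strongConvexOn_add_sq_norm_sub β yk

end Objective

theorem bddBelow_image_setOf_le {X : Type*} [PseudoMetricSpace X] [ProperSpace X] {F : X → ℝ}
    (hF : Continuous F) {c : ℝ} (hb : Bornology.IsBounded {z | F z ≤ c}) :
    BddBelow (F '' {z | F z ≤ c}) :=
  (Metric.isCompact_of_isClosed_isBounded (isClosed_le hF continuous_const) hb).bddBelow_image
    hF.continuousOn

namespace EIRL1

variable {n : ℕ} {p lam β Lf μ αbar : ℝ} {f : Vec n → ℝ} {x y : ℕ → Vec n}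
  {ε : ℕ → Fin n → ℝ} {α : ℕ → ℝ}

theorem beta_pos (H : EIRL1 n p lam β Lf μ αbar f x y ε α) : 0 < β :=
  H.hLf.trans_lt H.hβ

theorem eps_pos (H : EIRL1 n p lam β Lf μ αbar f x y ε α) : ∀ k i, 0 < ε k i
  | 0, i => H.hε0 i
  | k + 1, i => H.hεpos k i

theorem eps_succ_le (H : EIRL1 n p lam β Lf μ αbar f x y ε α) (k : ℕ) (i : Fin n) :
    ε (k + 1) i ≤ ε k i :=
  (H.hεdec k i).trans (mul_le_of_le_one_left (H.eps_pos k i).le H.hμ1.le)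

theorem weight_nonneg (H : EIRL1 n p lam β Lf μ αbar f x y ε α) (k : ℕ) (i : Fin n) :
    0 ≤ p * (|x k i| + ε k i) ^ (p - 1) := by
  have := H.eps_pos k i
  have := H.hp0
  positivity

theorem isMinOn_subObj (H : EIRL1 n p lam β Lf μ αbar f x y ε α) (k : ℕ) :
    IsMinOn (subObj n p lam β f (x k) (y k) (ε k)) Set.univ (x (k + 1)) :=
  isMinOn_univ_iff.2 fun z => by
    rcases eq_or_ne z (x (k + 1)) with rfl | hz
    · exact le_rfl
    · exact (H.hmin k z hz).le

theorem sum_rpow_le (H : EIRL1 n p lam β Lf μ αbar f x y ε α) (k : ℕ) :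
    ∑ i, (|x (k + 1) i| + ε (k + 1) i) ^ p
      ≤ ∑ i, (|x k i| + ε k i) ^ p + (∑ i, p * (|x k i| + ε k i) ^ (p - 1) * |x (k + 1) i|
        - ∑ i, p * (|x k i| + ε k i) ^ (p - 1) * |x k i|) := by
  rw [← Finset.sum_sub_distrib, ← Finset.sum_add_distrib]
  gcongr with i
  rw [← mul_sub]
  exact rpow_abs_add_le_of_le H.hp0.le H.hp1.le (H.eps_pos k i) (H.eps_pos (k + 1) i).le
    (H.eps_succ_le k i)

theorem norm_sub_extrapolation_sq_le (H : EIRL1 n p lam β Lf μ αbar f x y ε α) (k : ℕ) :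
    ‖x k - y k‖ ^ 2 ≤ αbar ^ 2 * ‖x k - x (k - 1)‖ ^ 2 := by
  rw [H.hy k, sub_add_cancel_left, norm_neg, norm_smul, Real.norm_of_nonneg (H.hα0 k), mul_pow]
  gcongr
  · exact H.hα0 k
  · exact H.hα1 k

theorem psiObj_succ_add_le (H : EIRL1 n p lam β Lf μ αbar f x y ε α) (k : ℕ) :
    psiObj n p lam β f (x (k + 1)) (x k) (ε (k + 1))
        + β / 2 * (1 - αbar ^ 2) * ‖x k - x (k - 1)‖ ^ 2
      ≤ psiObj n p lam β f (x k) (x (k - 1)) (ε k) := by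
  have hf : Differentiable ℝ f := H.hdiff.differentiable one_ne_zero
  have hmodel := (subObj_strongConvexOn (f := f) (yk := y k) (β := β) H.hlam.le
    (H.weight_nonneg k)).add_sq_norm_sub_le_of_isMinOn (H.isMinOn_subObj k) (x k)
  have hdescent := le_add_inner_gradient_add_sq_of_lipschitz hf H.hlip (y k) (x (k + 1))
  have hconvex := H.hconv.add_inner_gradient_le hf (y k) (x k)
  have hmajor := mul_le_mul_of_nonneg_left (H.sum_rpow_le k) H.hlam.le
  have hextra := mul_le_mul_of_nonneg_left (H.norm_sub_extrapolation_sq_le k)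
    (half_pos H.beta_pos).le
  have hLβ : Lf / 2 * ‖x (k + 1) - y k‖ ^ 2 ≤ β / 2 * ‖x (k + 1) - y k‖ ^ 2 := by
    gcongr
    exact H.hβ.le
  simp only [psiObj, Fobj, subObj, inner_sub_right, norm_sub_rev (x k) (x (k + 1))] at *
  linarith

theorem sum_range_add_psiObj_le (H : EIRL1 n p lam β Lf μ αbar f x y ε α) (N : ℕ) :
    β / 2 * (1 - αbar ^ 2) * ∑ k ∈ Finset.range N, ‖x k - x (k - 1)‖ ^ 2
        + psiObj n p lam β f (x N) (x (N - 1)) (ε N)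
      ≤ Fobj n p lam f (x 0) (ε 0) := by
  induction N with
  | zero => simp [psiObj]
  | succ N ih =>
    rw [Finset.sum_range_succ, Nat.add_sub_cancel]
    linarith [H.psiObj_succ_add_le N]

theorem sum_range_le (H : EIRL1 n p lam β Lf μ αbar f x y ε α) (N : ℕ) :
    β / 2 * (1 - αbar ^ 2) * ∑ k ∈ Finset.range N, ‖x k - x (k - 1)‖ ^ 2
      ≤ Fobj n p lam f (x 0) (ε 0)
        - sInf ((fun z => Fobj n p lam f z 0) ''
            {z : Vec n | Fobj n p lam f z 0 ≤ Fobj n p lam f (x 0) (ε 0)}) := by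
  have htel := H.sum_range_add_psiObj_le N
  have hsum_nonneg : 0 ≤ β / 2 * (1 - αbar ^ 2) * ∑ k ∈ Finset.range N, ‖x k - x (k - 1)‖ ^ 2 :=
    mul_nonneg (mul_nonneg (half_pos H.beta_pos).le
      (sub_nonneg.2 (pow_le_one₀ H.hαbar0 H.hαbar1.le))) (by positivity)
  have hxN : Fobj n p lam f (x N) 0 ≤ psiObj n p lam β f (x N) (x (N - 1)) (ε N) :=
    (Fobj_zero_le H.hp0.le H.hlam.le _ fun i => (H.eps_pos N i).le).trans
      (Fobj_le_psiObj H.beta_pos.le _ _ _)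
  have hinf := csInf_le (bddBelow_image_setOf_le
    (continuous_Fobj H.hdiff.continuous H.hp0.le 0) H.hlevel)
    (Set.mem_image_of_mem _ (hxN.trans (by linarith)))
  linarith

end EIRL1

/-- Square-summability of the steps (proved within Lemma 2.1(iii)). -/
theorem stmt_5 (n : ℕ) (p lam β Lf μ αbar : ℝ) (f : Vec n → ℝ)
    (x y : ℕ → Vec n) (ε : ℕ → Fin n → ℝ) (α : ℕ → ℝ)
    (H : EIRL1 n p lam β Lf μ αbar f x y ε α) :
    Summable (fun k => ‖x k - x (k - 1)‖ ^ 2) ∧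
      ∀ t : ℕ,
        β / 2 * (1 - αbar ^ 2) * ∑ k ∈ Finset.range (t + 1), ‖x k - x (k - 1)‖ ^ 2
          ≤ Fobj n p lam f (x 0) (ε 0)
            - sInf ((fun z => Fobj n p lam f z 0) ''
                {z : Vec n | Fobj n p lam f z 0 ≤ Fobj n p lam f (x 0) (ε 0)}) := by
  have hcoef : 0 < β / 2 * (1 - αbar ^ 2) :=
    mul_pos (half_pos H.beta_pos) (sub_pos.2 (pow_lt_one₀ H.hαbar0 H.hαbar1 two_ne_zero))
  exact ⟨summable_of_sum_range_le (fun k => by positivity)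
    fun N => (le_div_iff₀' hcoef).2 (H.sum_range_le N), fun t => H.sum_range_le (t + 1)⟩
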